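/- arXiv:2407.04436 — 2 statements merged into one kernel-verified Lean document; each statement's English description precedes it below -/
import Mathlib

section
/- Let x̄ ≠ x* and suppose there exist μ ∈ ℝ^m_+ and σ ∈ ℝ^p_+ such that Σ_{k=1}^m μ_k ∇T_k(x̄) + Σ_{i=1}^p σ_i ∇g_i(x̄) = 0 and μ_k T_k(x̄) = 0 for all k ∈ {1,…,m}. Then, setting γ_k = μ_k / ‖x̄ − x*‖^{2η} for k ∈ {1,…,m}, one has γ ∈ ℝ^m_+ and Σ_{k=1}^m γ_k ∇f_k(x̄) + Σ_{i=1}^p σ_i ∇g_i(x̄) = 0; moreover, if (μ, σ) ≠ 0 then (γ, σ) ≠ 0. -/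
/-!
Near `x̄ ≠ x*` the tunneling function is the quotient `(f_k - f_k(x*)) / ‖· - x*‖^{2η}` with a
denominator that is positive there. Whenever `μ_k ≠ 0`, complementarity forces the numerator to
vanish at `x̄`, so the derivative of the denominator drops out of the quotient rule and
`∇T_k(x̄) = ∇f_k(x̄) / ‖x̄ - x*‖^{2η}`. Rescaling the multipliers by this positive factor turns
stationarity for the `T_k` into stationarity for the `f_k`.
-/

section QuotientRule

variable {E : Type*} [NormedAddCommGroup E]

theorem HasFDerivAt.div_of_eq_zero [NormedSpace ℝ E] {u v : E → ℝ} {u' : E →L[ℝ] ℝ} {x : E}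
    (hu : HasFDerivAt u u' x) (hv : DifferentiableAt ℝ v x) (hux : u x = 0) (hvx : v x ≠ 0) :
    HasFDerivAt (fun y => u y / v y) ((v x)⁻¹ • u') x := by
  have h := hu.fun_mul (hv.fun_inv hvx).hasFDerivAt
  rw [hux, zero_smul, zero_add] at h
  simpa only [div_eq_mul_inv] using h

variable [InnerProductSpace ℝ E] [CompleteSpace E]

theorem HasGradientAt.div_of_eq_zero {u v : E → ℝ} {u' x : E}
    (hu : HasGradientAt u u' x) (hv : DifferentiableAt ℝ v x) (hux : u x = 0) (hvx : v x ≠ 0) :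
    HasGradientAt (fun y => u y / v y) ((v x)⁻¹ • u') x := by
  rw [hasGradientAt_iff_hasFDerivAt, map_smul]
  exact hu.hasFDerivAt.div_of_eq_zero hv hux hvx

end QuotientRule

section Tunneling

variable {E : Type*} [NormedAddCommGroup E] {x₀ x : E}

theorem rpow_norm_sub_pos (hx : x ≠ x₀) (r : ℝ) : 0 < ‖x - x₀‖ ^ r :=
  Real.rpow_pos_of_pos (norm_pos_iff.mpr (sub_ne_zero.mpr hx)) r

variable [InnerProductSpace ℝ E] [CompleteSpace E] {f T : E → ℝ} {r : ℝ}

theorem hasGradientAt_tunneling_of_eq {f' : E}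
    (hT : ∀ y, y ≠ x₀ → T y = (f y - f x₀) / ‖y - x₀‖ ^ r) (hx : x ≠ x₀)
    (hf : HasGradientAt f f' x) (hfx : f x = f x₀) :
    HasGradientAt T ((‖x - x₀‖ ^ r)⁻¹ • f') x := by
  have hdist : ‖x - x₀‖ ≠ 0 := norm_ne_zero_iff.mpr (sub_ne_zero.mpr hx)
  have hden : DifferentiableAt ℝ (fun y => ‖y - x₀‖ ^ r) x :=
    ((differentiableAt_id.sub_const x₀).norm ℝ (sub_ne_zero.mpr hx)).rpow_const (Or.inl hdist)
  refine HasGradientAt.congr_of_eventuallyEq ?_ ((eventually_ne_nhds hx).mono hT)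
  have hnum : HasGradientAt (fun y => f y - f x₀) f' x :=
    hasGradientAt_iff_hasFDerivAt.mpr (hf.hasFDerivAt.sub_const (f x₀))
  exact hnum.div_of_eq_zero hden (sub_eq_zero.mpr hfx) (rpow_norm_sub_pos hx r).ne'

theorem smul_gradient_tunneling_of_mul_eq_zero {μ : ℝ}
    (hT : ∀ y, y ≠ x₀ → T y = (f y - f x₀) / ‖y - x₀‖ ^ r) (hx : x ≠ x₀)
    (hf : DifferentiableAt ℝ f x) (hcomp : μ * T x = 0) :
    μ • gradient T x = (μ / ‖x - x₀‖ ^ r) • gradient f x := by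
  have hden : ‖x - x₀‖ ^ r ≠ 0 := (rpow_norm_sub_pos hx r).ne'
  rcases eq_or_ne μ 0 with rfl | hμ
  · simp
  have hfx : f x = f x₀ := by
    rw [hT x hx, mul_eq_zero, div_eq_zero_iff, sub_eq_zero] at hcomp
    tauto
  rw [(hasGradientAt_tunneling_of_eq hT hx hf.hasGradientAt hfx).gradient, smul_smul,
    div_eq_mul_inv]

end Tunneling

theorem tunneling_multipliers_transfer_general
    {n m p : ℕ}
    (f : Fin m → EuclideanSpace ℝ (Fin n) → ℝ)
    (g : Fin p → EuclideanSpace ℝ (Fin n) → ℝ)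
    (hf : ∀ k, ContDiff ℝ 1 (f k))
    (η : ℝ)
    (xstar : EuclideanSpace ℝ (Fin n))
    (T : Fin m → EuclideanSpace ℝ (Fin n) → ℝ)
    (hT : ∀ k x, x ≠ xstar → T k x = (f k x - f k xstar) / ‖x - xstar‖ ^ (2 * η))
    (xbar : EuclideanSpace ℝ (Fin n)) (hne : xbar ≠ xstar)
    (μ : Fin m → ℝ) (σ : Fin p → ℝ)
    (hμ : ∀ k, 0 ≤ μ k)
    (hstat : ∑ k, μ k • gradient (T k) xbar + ∑ i, σ i • gradient (g i) xbar = 0)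
    (hcompT : ∀ k, μ k * T k xbar = 0) :
    ∃ γ : Fin m → ℝ,
      γ = (fun k => μ k / ‖xbar - xstar‖ ^ (2 * η)) ∧
      (∀ k, 0 ≤ γ k) ∧
      ∑ k, γ k • gradient (f k) xbar + ∑ i, σ i • gradient (g i) xbar = 0 ∧
      (¬(μ = 0 ∧ σ = 0) → ¬(γ = 0 ∧ σ = 0)) := by
  have hc : 0 < ‖xbar - xstar‖ ^ (2 * η) := rpow_norm_sub_pos hne _
  refine ⟨_, rfl, fun k => div_nonneg (hμ k) hc.le, ?_, ?_⟩
  · rw [← hstat]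
    congr 1
    exact Finset.sum_congr rfl fun k _ => (smul_gradient_tunneling_of_mul_eq_zero (hT k) hne
      ((hf k).differentiable one_ne_zero).differentiableAt (hcompT k)).symm
  · rintro hμσ ⟨hγ, hσ⟩
    refine hμσ ⟨funext fun k => ?_, hσ⟩
    simpa [hc.ne'] using congrFun hγ k

/-- From multipliers for the tunneling gradients one obtains multipliers
`γ_k = μ_k / ‖x̄ − x*‖^{2η}` for the original gradients, preserving nonnegativity,
stationarity, and nontriviality. -/
theorem tunneling_multipliers_transfer
    {n m p : ℕ}
    (f : Fin m → EuclideanSpace ℝ (Fin n) → ℝ)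
    (g : Fin p → EuclideanSpace ℝ (Fin n) → ℝ)
    (hf : ∀ k, ContDiff ℝ 1 (f k)) (hg : ∀ i, ContDiff ℝ 1 (g i))
    (η : ℝ) (hη : 0 < η)
    (xstar : EuclideanSpace ℝ (Fin n))
    (T : Fin m → EuclideanSpace ℝ (Fin n) → ℝ)
    (hT : ∀ k x, x ≠ xstar → T k x = (f k x - f k xstar) / ‖x - xstar‖ ^ (2 * η))
    (xbar : EuclideanSpace ℝ (Fin n)) (hne : xbar ≠ xstar)
    (μ : Fin m → ℝ) (σ : Fin p → ℝ)
    (hμ : ∀ k, 0 ≤ μ k) (hσ : ∀ i, 0 ≤ σ i)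
    (hstat : ∑ k, μ k • gradient (T k) xbar + ∑ i, σ i • gradient (g i) xbar = 0)
    (hcompT : ∀ k, μ k * T k xbar = 0) :
    ∃ γ : Fin m → ℝ,
      γ = (fun k => μ k / ‖xbar - xstar‖ ^ (2 * η)) ∧
      (∀ k, 0 ≤ γ k) ∧
      ∑ k, γ k • gradient (f k) xbar + ∑ i, σ i • gradient (g i) xbar = 0 ∧
      (¬(μ = 0 ∧ σ = 0) → ¬(γ = 0 ∧ σ = 0)) :=
  tunneling_multipliers_transfer_general f g hf η xstar T hT xbar hne μ σ hμ hstat hcompT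
end

section
/- (Fritz John necessary condition) If a feasible point x* is a weak efficient solution of (MOP_C), then there exists (λ, μ) ∈ ℝ^m_+ × ℝ^p_+ with (λ, μ) ≠ 0 such that Σ_{k=1}^m λ_k ∇f_k(x*) + Σ_{i=1}^p μ_i ∇g_i(x*) = 0 and μ_i g_i(x*) = 0 for all i ∈ {1,…,p}. -/
/-!
Suppose some direction `d` has negative inner product with the gradients of all objectives and
of all active constraints at `x*`. Then a short step from `x*` along `d` strictly decreases every
objective, keeps the active constraints negative to first order and the inactive ones negative by
continuity, contradicting weak efficiency. By Gordan's alternative (separating `0` from the convex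
hull of these gradients) `0` is therefore a convex combination of them; its weights are the
multipliers, with `μ i = 0` for inactive constraints.
-/

open Filter Set Topology RealInnerProductSpace

theorem exists_weights_of_mem_convexHull_image {ι 𝕜 E : Type*} [Fintype ι] [Field 𝕜]
    [LinearOrder 𝕜] [IsStrictOrderedRing 𝕜] [AddCommGroup E] [Module 𝕜 E] (v : ι → E)
    (s : Set ι) {x : E} (hx : x ∈ convexHull 𝕜 (v '' s)) :
    ∃ w : ι → 𝕜, (∀ j, 0 ≤ w j) ∧ (∀ j ∉ s, w j = 0) ∧ ∑ j, w j = 1 ∧ ∑ j, w j • v j = x := by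
  classical
  suffices convexHull 𝕜 (v '' s) ⊆
      {y | ∃ w : ι → 𝕜, (∀ j, 0 ≤ w j) ∧ (∀ j ∉ s, w j = 0) ∧ ∑ j, w j = 1 ∧ ∑ j, w j • v j = y}
    from this hx
  refine convexHull_min ?_ ?_
  · rintro _ ⟨j, hj, rfl⟩
    exact ⟨Pi.single j 1, Pi.single_nonneg.2 zero_le_one,
      fun i hi => Pi.single_eq_of_ne (ne_of_mem_of_not_mem hj hi).symm _, by simp,
      by simp [Pi.single_apply]⟩
  · rintro _ ⟨w, hw0, hws, hw1, rfl⟩ _ ⟨w', hw0', hws', hw1', rfl⟩ a b ha hb hab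
    refine ⟨a • w + b • w', fun j => ?_, fun j hj => ?_, ?_, ?_⟩
    · simp only [Pi.add_apply, Pi.smul_apply, smul_eq_mul]
      exact add_nonneg (mul_nonneg ha (hw0 j)) (mul_nonneg hb (hw0' j))
    · simp [hws j hj, hws' j hj]
    · simp [Finset.sum_add_distrib, ← Finset.mul_sum, hw1, hw1', hab]
    · simp [add_smul, mul_smul, Finset.sum_add_distrib, ← Finset.smul_sum]

section Separation

variable {E : Type*} [NormedAddCommGroup E] [InnerProductSpace ℝ E] [CompleteSpace E]

theorem exists_inner_neg_of_zero_notMem {C : Set E} (hconv : Convex ℝ C) (hclosed : IsClosed C)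
    (h0 : (0 : E) ∉ C) : ∃ d : E, ∀ y ∈ C, ⟪y, d⟫ < 0 := by
  obtain ⟨L, u, hL0, hLC⟩ := geometric_hahn_banach_point_closed hconv hclosed h0
  refine ⟨-(InnerProductSpace.toDual ℝ E).symm L, fun y hy => ?_⟩
  rw [inner_neg_right, real_inner_comm, InnerProductSpace.toDual_symm_apply]
  have := hLC y hy
  rw [map_zero] at hL0
  linarith

theorem gordan_alternative {ι : Type*} [Fintype ι] (v : ι → E) (s : Set ι) :
    (∃ w : ι → ℝ, (∀ j, 0 ≤ w j) ∧ (∀ j ∉ s, w j = 0) ∧ ∑ j, w j = 1 ∧ ∑ j, w j • v j = 0) ∨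
      ∃ d : E, ∀ j ∈ s, ⟪v j, d⟫ < 0 := by
  by_cases h0 : (0 : E) ∈ convexHull ℝ (v '' s)
  · exact .inl (exists_weights_of_mem_convexHull_image v s h0)
  · have hclosed := ((s.toFinite.image v).isCompact_convexHull ℝ).isClosed
    obtain ⟨d, hd⟩ := exists_inner_neg_of_zero_notMem (convex_convexHull ℝ _) hclosed h0
    exact .inr ⟨d, fun j hj => hd _ (subset_convexHull ℝ _ (mem_image_of_mem v hj))⟩

end Separation

theorem HasDerivAt.eventually_nhdsGT_lt {h : ℝ → ℝ} {c a : ℝ} (hd : HasDerivAt h c a) (hc : c < 0) :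
    ∀ᶠ t in 𝓝[>] a, h t < h a := by
  have hslope := (hasDerivAt_iff_tendsto_slope.mp hd).mono_left (nhdsGT_le_nhdsNE a)
  filter_upwards [hslope (Iio_mem_nhds hc), self_mem_nhdsWithin] with t hneg (ht : a < t)
  rw [mem_preimage, slope_def_field, mem_Iio, div_neg_iff] at hneg
  rcases hneg with ⟨-, h⟩ | ⟨h, -⟩ <;> linarith

section Descent

variable {E : Type*} [NormedAddCommGroup E] [InnerProductSpace ℝ E] [CompleteSpace E]
  {f : E → ℝ} {x d : E}

theorem DifferentiableAt.hasDerivAt_comp_add_smul (hf : DifferentiableAt ℝ f x) :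
    HasDerivAt (fun t : ℝ => f (x + t • d)) ⟪gradient f x, d⟫ 0 := by
  have hline : HasDerivAt (fun t : ℝ => x + t • d) d 0 := by
    simpa using ((hasDerivAt_id (0 : ℝ)).smul_const d).const_add x
  rw [← InnerProductSpace.toDual_apply_apply]
  exact hf.hasGradientAt.hasFDerivAt.comp_hasDerivAt_of_eq 0 hline (by simp)

theorem eventually_lt_of_inner_gradient_neg (hf : DifferentiableAt ℝ f x)
    (hd : ⟪gradient f x, d⟫ < 0) : ∀ᶠ t in 𝓝[>] (0 : ℝ), f (x + t • d) < f x := by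
  simpa using hf.hasDerivAt_comp_add_smul.eventually_nhdsGT_lt hd

theorem eventually_nonpos_of_inner_gradient_neg (hf : DifferentiableAt ℝ f x) (hx : f x ≤ 0)
    (hd : f x = 0 → ⟪gradient f x, d⟫ < 0) : ∀ᶠ t in 𝓝[>] (0 : ℝ), f (x + t • d) ≤ 0 := by
  rcases hx.eq_or_lt with hx | hx
  · filter_upwards [eventually_lt_of_inner_gradient_neg hf (hd hx)] with t ht
    exact (hx ▸ ht).le
  · have hlim : Tendsto (fun t : ℝ => f (x + t • d)) (𝓝 0) (𝓝 (f x)) := by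
      simpa using hf.hasDerivAt_comp_add_smul.continuousAt.tendsto
    exact (hlim.eventually_lt_const hx).filter_mono nhdsWithin_le_nhds |>.mono fun _ => le_of_lt

end Descent

theorem exists_feasible_improvement_of_inner_gradient_neg {κ ι E : Type*} [Finite κ] [Finite ι]
    [NormedAddCommGroup E] [InnerProductSpace ℝ E] [CompleteSpace E]
    {f : κ → E → ℝ} {g : ι → E → ℝ} {x d : E}
    (hf : ∀ k, DifferentiableAt ℝ (f k) x) (hg : ∀ i, DifferentiableAt ℝ (g i) x)
    (hx : ∀ i, g i x ≤ 0) (hfd : ∀ k, ⟪gradient (f k) x, d⟫ < 0)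
    (hgd : ∀ i, g i x = 0 → ⟪gradient (g i) x, d⟫ < 0) :
    ∃ y, (∀ i, g i y ≤ 0) ∧ ∀ k, f k y < f k x := by
  have hfeas := eventually_all.2 fun i =>
    eventually_nonpos_of_inner_gradient_neg (hg i) (hx i) (hgd i)
  have himpr := eventually_all.2 fun k => eventually_lt_of_inner_gradient_neg (hf k) (hfd k)
  obtain ⟨t, ht⟩ := (hfeas.and himpr).exists
  exact ⟨x + t • d, ht⟩

theorem fritz_john_necessary_condition_general
    {n m p : ℕ}
    (f : Fin m → EuclideanSpace ℝ (Fin n) → ℝ)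
    (g : Fin p → EuclideanSpace ℝ (Fin n) → ℝ)
    (hf : ∀ k, ContDiff ℝ 1 (f k)) (hg : ∀ i, ContDiff ℝ 1 (g i))
    (xstar : EuclideanSpace ℝ (Fin n)) (hfeas : ∀ i, g i xstar ≤ 0)
    -- x* is a weak efficient solution of (MOP_C):
    (hweff : ¬∃ x : EuclideanSpace ℝ (Fin n),
      (∀ i, g i x ≤ 0) ∧ ∀ k, f k x < f k xstar) :
    ∃ (lam : Fin m → ℝ) (μ : Fin p → ℝ),
      (∀ k, 0 ≤ lam k) ∧ (∀ i, 0 ≤ μ i) ∧ ¬(lam = 0 ∧ μ = 0) ∧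
      ∑ k, lam k • gradient (f k) xstar + ∑ i, μ i • gradient (g i) xstar = 0 ∧
      (∀ i, μ i * g i xstar = 0) := by
  have hfd k : DifferentiableAt ℝ (f k) xstar := (hf k).differentiable one_ne_zero _
  have hgd i : DifferentiableAt ℝ (g i) xstar := (hg i).differentiable one_ne_zero _
  let active : Set (Fin m ⊕ Fin p) := Sum.elim (fun _ => True) (fun i => g i xstar = 0)
  rcases gordan_alternative (Sum.elim (fun k => gradient (f k) xstar)
      fun i => gradient (g i) xstar) active with ⟨w, hw0, hw_active, hw1, hwv⟩ | ⟨d, hd⟩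
  · refine ⟨w ∘ Sum.inl, w ∘ Sum.inr, fun k => hw0 _, fun i => hw0 _, ?_, ?_, fun i => ?_⟩
    · rintro ⟨hl, hμ⟩
      simp only [funext_iff, Function.comp_apply, Pi.zero_apply] at hl hμ
      simp [Fintype.sum_sum_type, hl, hμ] at hw1
    · simpa [Fintype.sum_sum_type] using hwv
    · by_cases hi : g i xstar = 0
      · simp [hi]
      · simp [hw_active (.inr i) hi]
  · exact (hweff <| exists_feasible_improvement_of_inner_gradient_neg hfd hgd hfeas
      (fun k => hd (.inl k) trivial) fun i => hd (.inr i)).elim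

/-- Fritz John necessary condition: a weak efficient solution of
(MOP_C) admits nonzero nonnegative multipliers satisfying stationarity and
complementary slackness. -/
theorem fritz_john_necessary_condition
    {n m p : ℕ} (hm : 2 ≤ m)
    (f : Fin m → EuclideanSpace ℝ (Fin n) → ℝ)
    (g : Fin p → EuclideanSpace ℝ (Fin n) → ℝ)
    (hf : ∀ k, ContDiff ℝ 1 (f k)) (hg : ∀ i, ContDiff ℝ 1 (g i))
    (xstar : EuclideanSpace ℝ (Fin n)) (hfeas : ∀ i, g i xstar ≤ 0)
    -- x* is a weak efficient solution of (MOP_C):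
    (hweff : ¬∃ x : EuclideanSpace ℝ (Fin n),
      (∀ i, g i x ≤ 0) ∧ ∀ k, f k x < f k xstar) :
    ∃ (lam : Fin m → ℝ) (μ : Fin p → ℝ),
      (∀ k, 0 ≤ lam k) ∧ (∀ i, 0 ≤ μ i) ∧ ¬(lam = 0 ∧ μ = 0) ∧
      ∑ k, lam k • gradient (f k) xstar + ∑ i, μ i • gradient (g i) xstar = 0 ∧
      (∀ i, μ i * g i xstar = 0) :=
  fritz_john_necessary_condition_general f g hf hg xstar hfeas hweff
end
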